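/- arXiv:1503.01144 — 5 statements merged into one kernel-verified Lean document; each statement's English description precedes it below -/
import Mathlib

section
/- Let 𝔄 be a structure, X a team, and x̄⊥_z̄ȳ a conditional independence atom. Suppose Y⊆X is such that every pair s₁,s₂∈Y with s₁(z̄)=s₂(z̄) has a witness in X, i.e., there exists s₃∈X with s₃(z̄)=s₁(z̄), s₃(x̄)=s₁(x̄), s₃(ȳ)=s₂(ȳ). Then there exists a team Y' with Y⊆Y'⊆X such that 𝔄⊨_{Y'} x̄⊥_z̄ȳ, obtained by iteratively adding witnesses; moreover each added witness remains pairwise witnessed (in X) with every previously added assignment. -/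
/-!
Among the finitely many subteams `Z ⊆ X` in which every pair agreeing on `z̄` has a witness in
`X`, choose one that is maximal and contains `Y`. A witness `t ∈ X` of a pair `(s, s')` of `Z`
can be added to `Z` without losing this property: `t` agrees with `s` on `z̄x̄` and with `s'` on
`ȳ`, so the pairs involving `t` are witnessed by witnesses of pairs involving `s` or `s'`.
By maximality `Z` already contains the witnesses of its pairs, i.e. it satisfies `x̄ ⊥_z̄ ȳ`.
-/

/-- Team satisfaction of the conditional independence atom `x̄ ⊥_z̄ ȳ`. -/
def indepSat {V A : Type*} (xs ys zs : List V) (X : Set (V → A)) : Prop :=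
  ∀ s ∈ X, ∀ s' ∈ X, zs.map s = zs.map s' →
    ∃ s'' ∈ X, zs.map s'' = zs.map s ∧ xs.map s'' = xs.map s ∧ ys.map s'' = ys.map s'

namespace IndepAtom

variable {V A : Type*} (xs ys zs : List V)

def IsWitness (s₁ s₂ s₃ : V → A) : Prop :=
  zs.map s₃ = zs.map s₁ ∧ xs.map s₃ = xs.map s₁ ∧ ys.map s₃ = ys.map s₂

def PairwiseWitnessed (X Z : Set (V → A)) : Prop :=
  ∀ s₁ ∈ Z, ∀ s₂ ∈ Z, zs.map s₁ = zs.map s₂ → ∃ s₃ ∈ X, IsWitness xs ys zs s₁ s₂ s₃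

variable {xs ys zs}

theorem PairwiseWitnessed.insert_witness {X Z : Set (V → A)} (hZ : PairwiseWitnessed xs ys zs X Z)
    {s s' t : V → A} (hs : s ∈ Z) (hs' : s' ∈ Z) (hzs : zs.map s = zs.map s') (htX : t ∈ X)
    (ht : IsWitness xs ys zs s s' t) : PairwiseWitnessed xs ys zs X (insert t Z) := by
  obtain ⟨htz, htx, hty⟩ := ht
  rintro u₁ (rfl | hu₁) u₂ (rfl | hu₂) hz
  · exact ⟨_, htX, rfl, rfl, rfl⟩
  · obtain ⟨w, hwX, hwz, hwx, hwy⟩ := hZ s hs u₂ hu₂ (htz ▸ hz)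
    exact ⟨w, hwX, hwz.trans htz.symm, hwx.trans htx.symm, hwy⟩
  · obtain ⟨w, hwX, hwz, hwx, hwy⟩ := hZ u₁ hu₁ s' hs' (hz.trans (htz.trans hzs))
    exact ⟨w, hwX, hwz, hwx, hwy.trans hty.symm⟩
  · exact hZ u₁ hu₁ u₂ hu₂ hz

theorem indepSat_of_maximal {X Z : Set (V → A)}
    (hZ : Maximal (fun W ↦ W ⊆ X ∧ PairwiseWitnessed xs ys zs X W) Z) :
    indepSat xs ys zs Z := by
  obtain ⟨⟨hZX, hZ⟩, hmax⟩ := hZ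
  intro s hs s' hs' hzs
  obtain ⟨t, htX, ht⟩ := hZ s hs s' hs' hzs
  have htZ : insert t Z ⊆ Z :=
    hmax ⟨Set.insert_subset htX hZX, hZ.insert_witness hs hs' hzs htX ht⟩ (Set.subset_insert t Z)
  exact ⟨t, htZ (Set.mem_insert t Z), ht⟩

theorem exists_maximal_pairwiseWitnessed {X Y : Set (V → A)} (hX : X.Finite) (hYX : Y ⊆ X)
    (hY : PairwiseWitnessed xs ys zs X Y) :
    ∃ Z, Y ⊆ Z ∧ Maximal (fun W ↦ W ⊆ X ∧ PairwiseWitnessed xs ys zs X W) Z :=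
  (hX.finite_subsets.subset fun _ hW ↦ hW.1).exists_le_maximal
    (s := {W | W ⊆ X ∧ PairwiseWitnessed xs ys zs X W}) ⟨hYX, hY⟩

end IndepAtom

open IndepAtom in
theorem extend_to_indep_team {V A : Type*} (xs ys zs : List V)
    (X Y : Set (V → A)) (hX : X.Finite) (hYX : Y ⊆ X)
    (h : ∀ s₁ ∈ Y, ∀ s₂ ∈ Y, zs.map s₁ = zs.map s₂ →
      ∃ s₃ ∈ X, zs.map s₃ = zs.map s₁ ∧ xs.map s₃ = xs.map s₁ ∧
        ys.map s₃ = ys.map s₂) :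
    ∃ Y' : Set (V → A), Y ⊆ Y' ∧ Y' ⊆ X ∧ indepSat xs ys zs Y' ∧
      (∀ s₁ ∈ Y', ∀ s₂ ∈ Y', zs.map s₁ = zs.map s₂ →
        ∃ s₃ ∈ X, zs.map s₃ = zs.map s₁ ∧ xs.map s₃ = xs.map s₁ ∧
          ys.map s₃ = ys.map s₂) := by
  obtain ⟨Y', hYY', hmax⟩ := exists_maximal_pairwiseWitnessed hX hYX h
  exact ⟨Y', hYY', hmax.prop.1, indepSat_of_maximal hmax, hmax.prop.2⟩
end

section
/- Let G=(V_G,E_G) be a finite graph, let 𝔄 be the structure of empty signature with domain V_G, and let X be the team over variables x,y given by X = {(v,v) : v∈V_G} ∪ {(v₁,v₂),(v₂,v₁) : (v₁,v₂)∈E_G} (writing (a,b) for the assignment x↦a, y↦b). Then G has a 3-clique cover (three cliques C₁,C₂,C₃ of G whose vertex sets cover V_G) if and only if 𝔄⊨_X (x⊥y) ∨ (x⊥y) ∨ (x⊥y) ∨ x≠y. -/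
/- Statement 6.  Let G be a finite graph, 𝔄 the structure of empty signature
with domain the vertices of G, and X the team over variables x, y given by
X = {(v,v) : v ∈ V_G} ∪ {(v₁,v₂), (v₂,v₁) : (v₁,v₂) ∈ E_G}
(assignments over {x,y} are written as pairs).  Then G has a 3-clique cover
iff 𝔄 ⊨_X (x⊥y) ∨ (x⊥y) ∨ (x⊥y) ∨ x ≠ y. -/

/-- Team satisfaction of the pure independence atom `x ⊥ y` on a team of
assignments over `{x, y}`, written as pairs. -/
def pureIndepSat {V : Type*} (S : Set (V × V)) : Prop :=
  ∀ p ∈ S, ∀ q ∈ S, ∃ r ∈ S, r.1 = p.1 ∧ r.2 = q.2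

/-- The team associated with the graph `G`. -/
def graphTeam {V : Type*} (G : SimpleGraph V) : Set (V × V) :=
  {p | p.1 = p.2 ∨ G.Adj p.1 p.2}

lemma prod_pureIndepSat {V : Type*} (C : Set V) :
    pureIndepSat (C ×ˢ C) := by
  rintro p ⟨hp1, hp2⟩ q ⟨hq1, hq2⟩
  exact ⟨(p.1, q.2), ⟨hp1, hq2⟩, rfl, rfl⟩

lemma clique_of_indep {V : Type*} (G : SimpleGraph V) (X : Set (V × V))
    (hX : X ⊆ graphTeam G) (h : pureIndepSat X) :
    G.IsClique {v | (v, v) ∈ X} := by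
  intro u hu v hv huv
  obtain ⟨r, hr, h1, h2⟩ := h _ hu _ hv
  have := hX hr
  rcases this with heq | hadj
  · simp only [h1, h2] at heq; exact absurd heq huv
  · rwa [h1, h2] at hadj

/-- `G` has a 3-clique cover iff
`𝔄 ⊨_X (x⊥y) ∨ (x⊥y) ∨ (x⊥y) ∨ x ≠ y`, with the lax team semantics of the
disjunction spelled out. -/
theorem three_clique_cover_iff_teamSat {V : Type*} [Fintype V]
    (G : SimpleGraph V) :
    (∃ C₁ C₂ C₃ : Set V, G.IsClique C₁ ∧ G.IsClique C₂ ∧ G.IsClique C₃ ∧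
        C₁ ∪ C₂ ∪ C₃ = Set.univ)
      ↔ ∃ X₁ X₂ X₃ X₄ : Set (V × V), X₁ ∪ X₂ ∪ X₃ ∪ X₄ = graphTeam G ∧
          pureIndepSat X₁ ∧ pureIndepSat X₂ ∧ pureIndepSat X₃ ∧
          ∀ p ∈ X₄, p.1 ≠ p.2 := by
  constructor
  · rintro ⟨C₁, C₂, C₃, h1, h2, h3, hcov⟩
    refine ⟨C₁ ×ˢ C₁, C₂ ×ˢ C₂, C₃ ×ˢ C₃, {p ∈ graphTeam G | p.1 ≠ p.2},
      ?_, prod_pureIndepSat _, prod_pureIndepSat _, prod_pureIndepSat _,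
      fun p hp => hp.2⟩
    apply Set.Subset.antisymm
    · rintro p hp
      rcases hp with ((⟨ha, hb⟩ | ⟨ha, hb⟩) | ⟨ha, hb⟩) | hp
      · rcases eq_or_ne p.1 p.2 with h | h
        · exact Or.inl h
        · exact Or.inr (h1 ha hb h)
      · rcases eq_or_ne p.1 p.2 with h | h
        · exact Or.inl h
        · exact Or.inr (h2 ha hb h)
      · rcases eq_or_ne p.1 p.2 with h | h
        · exact Or.inl h
        · exact Or.inr (h3 ha hb h)
      · exact hp.1
    · rintro p hp
      rcases eq_or_ne p.1 p.2 with h | h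
      · have : p.1 ∈ C₁ ∪ C₂ ∪ C₃ := hcov ▸ Set.mem_univ _
        rcases this with (hc | hc) | hc
        · exact Or.inl (Or.inl (Or.inl ⟨hc, h ▸ hc⟩))
        · exact Or.inl (Or.inl (Or.inr ⟨hc, h ▸ hc⟩))
        · exact Or.inl (Or.inr ⟨hc, h ▸ hc⟩)
      · exact Or.inr ⟨hp, h⟩
  · rintro ⟨X₁, X₂, X₃, X₄, hun, h1, h2, h3, h4⟩
    have hsub : ∀ X : Set (V × V), X ⊆ X₁ ∪ X₂ ∪ X₃ ∪ X₄ → X ⊆ graphTeam G :=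
      fun X h => hun ▸ h
    refine ⟨{v | (v, v) ∈ X₁}, {v | (v, v) ∈ X₂}, {v | (v, v) ∈ X₃},
      clique_of_indep G X₁ (hsub _ (by intro p hp; exact Or.inl (Or.inl (Or.inl hp)))) h1,
      clique_of_indep G X₂ (hsub _ (by intro p hp; exact Or.inl (Or.inl (Or.inr hp)))) h2,
      clique_of_indep G X₃ (hsub _ (by intro p hp; exact Or.inl (Or.inr hp))) h3, ?_⟩
    ext v
    simp only [Set.mem_univ, iff_true]
    have : (v, v) ∈ graphTeam G := Or.inl rfl
    rw [← hun] at this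
    rcases this with ((h | h) | h) | h
    · exact Or.inl (Or.inl h)
    · exact Or.inl (Or.inr h)
    · exact Or.inr h
    · exact absurd rfl (h4 _ h)
end

section
/- Let G=(V_G,E_G) be a finite graph, 𝔄 the structure of empty signature with domain V_G, and X the team over variables x,y given by X = {(v,v) : v∈V_G} ∪ {(v₁,v₂),(v₂,v₁) : (v₁,v₂)∈E_G}. If Y⊆X is a team with 𝔄⊨_Y x⊥y, then the set C = {v∈V_G : (v,v)∈Y} is a clique of G. -/
theorem indep_subteam_gives_clique {V : Type*} [Fintype V]
    (G : SimpleGraph V) (Y : Set (V × V)) (hY : Y ⊆ graphTeam G)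
    (hind : pureIndepSat Y) :
    G.IsClique {v : V | (v, v) ∈ Y} := by
  intro u hu v hv huv
  obtain ⟨r, hr, h1, h2⟩ := hind (u, u) hu (v, v) hv
  have := hY hr
  rcases this with h | h
  · rw [h1, h2] at h; exact absurd h huv
  · rwa [h1, h2] at h
end

section
/- Let σ be a relational signature and let φ = ∀x₁…∀x_n ⋀_i θ_i(x₁,…,x_n,y₁,…,y_m), where each θ_i is a first-order literal, a dependence atom, or an independence atom over the displayed variables. Then there exists a first-order sentence ψ' over the signature σ∪{R}, where R is a fresh m-ary relation symbol, such that for every σ-structure 𝔄 and every team X with domain {y₁,…,y_m}: 𝔄⊨_X φ if and only if (𝔄, X(ȳ)) ⊨ ψ', where X(ȳ)={(s(y₁),…,s(y_m)) : s∈X} interprets R. -/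
/- Statement 11.  Let σ be a relational signature and
φ = ∀x₁…∀x_n ⋀_i θ_i(x₁,…,x_n,y₁,…,y_m), where each θ_i is a first-order
literal, a dependence atom, or an independence atom over the displayed
variables.  Then there is a first-order sentence ψ' over σ ∪ {R} (R a fresh
m-ary relation symbol) such that for every σ-structure 𝔄 and every team X
with domain {y₁,…,y_m}:  𝔄 ⊨_X φ  iff  (𝔄, X(ȳ)) ⊨ ψ', where
X(ȳ) = {(s(y₁),…,s(y_m)) : s ∈ X} interprets R. -/

open FirstOrder

/-- The signature `σ ∪ {R}` obtained from `L` by adding a fresh `m`-ary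
relation symbol `R`. -/
def addRel (L : FirstOrder.Language) (m : ℕ) : FirstOrder.Language where
  Functions := L.Functions
  Relations := fun k => L.Relations k ⊕ PLift (k = m)

/-- The expansion `(𝔄, R)` of an `L`-structure `𝔄` to an
`addRel L m`-structure interpreting the fresh symbol by the `m`-ary relation
`R`. -/
def expandStructure (L : FirstOrder.Language) (m : ℕ) (A : Type*)
    [L.Structure A] (R : (Fin m → A) → Prop) : (addRel L m).Structure A where
  funMap := fun f v => Language.Structure.funMap (L := L) f v
  RelMap := fun {k} r v =>
    match r with
    | Sum.inl r => Language.Structure.RelMap (L := L) r v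
    | Sum.inr h => R (fun j => v (Fin.cast h.down.symm j))

/-- Atoms: first-order literals (over relation symbols of `L` and equality),
dependence atoms, and (conditional) independence atoms, with variables from
`V`. -/
inductive Atom (L : FirstOrder.Language) (V : Type*) : Type _ where
  | rel {k : ℕ} (R : L.Relations k) (ts : Fin k → V)
  | nrel {k : ℕ} (R : L.Relations k) (ts : Fin k → V)
  | eq (a b : V)
  | neq (a b : V)
  | dep (xs : List V) (y : V)
  | indep (xs ys zs : List V)

/-- Team satisfaction of an atom. -/
def atomSat {L : FirstOrder.Language} {V : Type*} (A : Type*) [L.Structure A] :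
    Atom L V → Set (V → A) → Prop
  | .rel R ts, X => ∀ s ∈ X, Language.Structure.RelMap R (fun i => s (ts i))
  | .nrel R ts, X => ∀ s ∈ X, ¬ Language.Structure.RelMap R (fun i => s (ts i))
  | .eq a b, X => ∀ s ∈ X, s a = s b
  | .neq a b, X => ∀ s ∈ X, s a ≠ s b
  | .dep xs y, X => ∀ s ∈ X, ∀ s' ∈ X, xs.map s = xs.map s' → s y = s' y
  | .indep xs ys zs, X => ∀ s ∈ X, ∀ s' ∈ X, zs.map s = zs.map s' →
      ∃ s'' ∈ X, zs.map s'' = zs.map s ∧ xs.map s'' = xs.map s ∧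
        ys.map s'' = ys.map s'

/-
Universally quantifying `x̄` turns `X` into the team of all assignments `t` with `t(ȳ) ∈ X`,
so "`t` belongs to the team" is the atomic formula `R(t(ȳ))`. Each atom is a first-order
condition on members of this team: a literal on one member, a dependence atom on two, an
independence atom on two together with an existentially quantified third. Relativizing these
team quantifiers to `R` gives a sentence for each atom, and `φ` is their finite conjunction.
-/

namespace FirstOrder.Language.Formula

variable {L : Language} {α : Type*} [Finite α]

noncomputable def allClosure (φ : L.Formula α) : L.Sentence :=
  (φ.relabel Sum.inr).iAlls α

theorem realize_allClosure {M : Type*} [L.Structure M] (φ : L.Formula α) :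
    M ⊨ φ.allClosure ↔ ∀ v : α → M, φ.Realize v := by
  simp [allClosure, Sentence.Realize]

end FirstOrder.Language.Formula

namespace TeamDefinability

open FirstOrder Language

variable {L : Language} {m : ℕ} {μ : Type*}

def freshRel (L : Language) (m : ℕ) : (addRel L m).Relations m :=
  Sum.inr ⟨rfl⟩

def memTeam (f : Fin m → μ) : (addRel L m).Formula μ :=
  (freshRel L m).formula fun j => Term.var (f j)

def eqOn {W : Type*} (xs : List W) (f g : W → μ) : (addRel L m).Formula μ :=
  (xs.map fun x => (Term.var (f x)).equal (Term.var (g x))).foldr (· ⊓ ·) ⊤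

variable {V : Type*} [Finite V]

noncomputable def forallMem (y : Fin m → V) (φ : (addRel L m).Formula V) :
    (addRel L m).Sentence :=
  ((memTeam y).imp φ).allClosure

noncomputable def forallMem₂ (y : Fin m → V) (φ : (addRel L m).Formula (V ⊕ V)) :
    (addRel L m).Sentence :=
  ((memTeam (Sum.inl ∘ y) ⊓ memTeam (Sum.inr ∘ y)).imp φ).allClosure

noncomputable def existsMem (y : Fin m → V) (φ : (addRel L m).Formula (μ ⊕ V)) :
    (addRel L m).Formula μ :=
  (memTeam (Sum.inr ∘ y) ⊓ φ).iExs V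

noncomputable def atomSentence (y : Fin m → V) : Atom L V → (addRel L m).Sentence
  | .rel R ts => forallMem y (Relations.formula (Sum.inl R) fun i => Term.var (ts i))
  | .nrel R ts => forallMem y (Relations.formula (Sum.inl R) fun i => Term.var (ts i)).not
  | .eq a b => forallMem y ((Term.var a).equal (Term.var b))
  | .neq a b => forallMem y ((Term.var a).equal (Term.var b)).not
  | .dep xs z => forallMem₂ y
      ((eqOn xs Sum.inl Sum.inr).imp ((Term.var (Sum.inl z)).equal (Term.var (Sum.inr z))))
  -- the members `s, s', s''` of the independence atom are `Sum.inl ∘ Sum.inl`, `Sum.inl ∘ Sum.inr`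
  -- and `Sum.inr` in the innermost formula
  | .indep xs ys zs => forallMem₂ y <| (eqOn zs Sum.inl Sum.inr).imp <| existsMem y <|
      eqOn zs Sum.inr (Sum.inl ∘ Sum.inl) ⊓ eqOn xs Sum.inr (Sum.inl ∘ Sum.inl) ⊓
        eqOn ys Sum.inr (Sum.inl ∘ Sum.inr)

section Realize

variable {A : Type*} [L.Structure A] (X : Set (Fin m → A))

omit [Finite V] in
theorem setOf_exists_mem_forall_apply_eq (y : Fin m → V) :
    {t : V → A | ∃ s ∈ X, ∀ j, t (y j) = s j} = {t | t ∘ y ∈ X} :=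
  Set.ext fun t => ⟨fun ⟨s, hs, h⟩ => show t ∘ y ∈ X from (funext h : t ∘ y = s) ▸ hs,
    fun h => ⟨_, h, fun _ => rfl⟩⟩

theorem realize_memTeam (f : Fin m → μ) (v : μ → A) :
    @Formula.Realize _ A (expandStructure L m A (· ∈ X)) _ (memTeam f) v ↔ v ∘ f ∈ X :=
  Iff.rfl

theorem realize_inl_rel {k : ℕ} (R : L.Relations k) (ts : Fin k → μ) (v : μ → A) :
    @Formula.Realize _ A (expandStructure L m A (· ∈ X)) _
        (Relations.formula (Sum.inl R : (addRel L m).Relations k) fun i => Term.var (ts i)) v ↔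
      Structure.RelMap R (v ∘ ts) :=
  Iff.rfl

theorem realize_eqOn {W : Type*} (xs : List W) (f g : W → μ) (v : μ → A) :
    @Formula.Realize _ A (expandStructure L m A (· ∈ X)) _ (eqOn xs f g) v ↔
      xs.map (v ∘ f) = xs.map (v ∘ g) := by
  let := expandStructure L m A (· ∈ X)
  simp [eqOn, Formula.Realize, BoundedFormula.realize_foldr_inf, Term.equal, List.map_inj_left]

theorem realize_forallMem (y : Fin m → V) (φ : (addRel L m).Formula V) :
    @Sentence.Realize _ A (expandStructure L m A (· ∈ X)) (forallMem y φ) ↔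
      ∀ t : V → A, t ∘ y ∈ X →
        @Formula.Realize _ A (expandStructure L m A (· ∈ X)) _ φ t := by
  let := expandStructure L m A (· ∈ X)
  simp only [forallMem, Formula.realize_allClosure, Formula.realize_imp, realize_memTeam]

theorem realize_forallMem₂ (y : Fin m → V) (φ : (addRel L m).Formula (V ⊕ V)) :
    @Sentence.Realize _ A (expandStructure L m A (· ∈ X)) (forallMem₂ y φ) ↔
      ∀ t : V → A, t ∘ y ∈ X → ∀ t' : V → A, t' ∘ y ∈ X →
        @Formula.Realize _ A (expandStructure L m A (· ∈ X)) _ φ (Sum.elim t t') := by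
  let := expandStructure L m A (· ∈ X)
  simp only [forallMem₂, Formula.realize_allClosure, Formula.realize_imp, Formula.realize_inf,
    realize_memTeam, ← Function.comp_assoc, and_imp]
  exact ⟨fun h t ht t' ht' => h _ ht ht', fun h v hl hr => by simpa using h _ hl _ hr⟩

theorem realize_existsMem (y : Fin m → V) (φ : (addRel L m).Formula (μ ⊕ V)) (v : μ → A) :
    @Formula.Realize _ A (expandStructure L m A (· ∈ X)) _ (existsMem y φ) v ↔
      ∃ t : V → A, t ∘ y ∈ X ∧
        @Formula.Realize _ A (expandStructure L m A (· ∈ X)) _ φ (Sum.elim v t) := by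
  let := expandStructure L m A (· ∈ X)
  simp only [existsMem, Formula.realize_iExs, Formula.realize_inf, realize_memTeam,
    ← Function.comp_assoc, Sum.elim_comp_inr]

theorem atomSat_iff_realize_atomSentence (y : Fin m → V) (θ : Atom L V) :
    atomSat A θ {t | t ∘ y ∈ X} ↔
      @Sentence.Realize _ A (expandStructure L m A (· ∈ X)) (atomSentence y θ) := by
  let := expandStructure L m A (· ∈ X)
  cases θ with
  | rel R ts => simp only [atomSentence, realize_forallMem, realize_inl_rel]; rfl
  | nrel R ts =>
    simp only [atomSentence, realize_forallMem, Formula.realize_not, realize_inl_rel]; rfl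
  | eq a b => simp only [atomSentence, realize_forallMem, Formula.realize_equal]; rfl
  | neq a b =>
    simp only [atomSentence, realize_forallMem, Formula.realize_not, Formula.realize_equal]; rfl
  | dep xs z =>
    simp only [atomSentence, realize_forallMem₂, Formula.realize_imp, realize_eqOn,
      Formula.realize_equal]
    rfl
  | indep xs ys zs =>
    simp only [atomSentence, realize_forallMem₂, Formula.realize_imp, realize_eqOn,
      realize_existsMem, Formula.realize_inf, ← Function.comp_assoc, Sum.elim_comp_inl,
      Sum.elim_comp_inr, and_assoc]
    rfl

end Realize

end TeamDefinability

open Language TeamDefinability in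
/-- The formula
`φ = ∀x₁…∀x_n ⋀_{i ∈ ι} θ_i` (variables `Sum.inl` are the universally
quantified `x`'s, variables `Sum.inr` the free `y`'s) is, on teams `X` with
domain `{y₁,…,y_m}`, equivalent to a first-order sentence `ψ'` over
`σ ∪ {R}`, where `R` is interpreted by `X(ȳ)`.  The team obtained from `X`
by universally quantifying the `x`'s is
`X(A/x̄) = {t : ∃ s ∈ X, t` agrees with `s` on the `y`'s `}`. -/
theorem forall_conj_atoms_fo_definable (L : FirstOrder.Language) (n m : ℕ)
    (ι : Type) [Fintype ι] (θ : ι → Atom L (Fin n ⊕ Fin m)) :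
    ∃ ψ' : (addRel L m).Sentence,
      ∀ (A : Type) [L.Structure A] (X : Set (Fin m → A)), X.Finite →
        ((∀ i : ι, atomSat A (θ i)
            {t : (Fin n ⊕ Fin m) → A | ∃ s ∈ X, ∀ j, t (Sum.inr j) = s j})
          ↔ @FirstOrder.Language.Sentence.Realize (addRel L m) A
              (expandStructure L m A (fun v => v ∈ X)) ψ') := by
  refine ⟨Formula.iInf fun i => atomSentence Sum.inr (θ i), fun A _ X _ => ?_⟩
  let := expandStructure L m A (· ∈ X)
  rw [setOf_exists_mem_forall_apply_eq, Sentence.Realize, Formula.realize_iInf]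
  exact forall_congr' fun i => atomSat_iff_realize_atomSentence X Sum.inr (θ i)
end

section
/- If ψ is a k-coherent team-semantics formula and θ is a first-order formula, then ψ∨θ is k-coherent: for every structure 𝔄 and team X, 𝔄⊨_X ψ∨θ if and only if 𝔄⊨_Y ψ∨θ for every subteam Y⊆X with |Y|=k. -/
/- Statement 14.  If ψ is a k-coherent (and downward closed) team-semantics
formula and θ is a first-order formula, then ψ ∨ θ is k-coherent.

The team-semantics formula ψ is modelled abstractly by its satisfaction
relation `S` on (finite) teams, and the first-order formula θ by its Tarskian
satisfaction predicate `T` (by flatness a team satisfies θ iff all its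
members do).  Lax semantics of the disjunction: X splits as Y ∪ Z with `S Y`
and all members of `Z` satisfying `T`. -/

theorem or_fo_coherent {V A : Type*} (k : ℕ)
    (S : Set (V → A) → Prop) (T : (V → A) → Prop)
    (hdc : ∀ X Y : Set (V → A), Y ⊆ X → S X → S Y)
    (hcoh : ∀ X : Set (V → A), X.Finite →
      (S X ↔ ∀ Y ⊆ X, Y.ncard = k → S Y)) :
    ∀ X : Set (V → A), X.Finite →
      ((∃ Y Z : Set (V → A), Y ∪ Z = X ∧ S Y ∧ ∀ s ∈ Z, T s)
        ↔ ∀ W ⊆ X, W.ncard = k →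
            ∃ Y Z : Set (V → A), Y ∪ Z = W ∧ S Y ∧ ∀ s ∈ Z, T s) := by
  intro X hX
  constructor
  · rintro ⟨Y, Z, rfl, hS, hT⟩ W hW hWk
    exact ⟨W ∩ Y, W ∩ Z, by rw [← Set.inter_union_distrib_left]; exact Set.inter_eq_self_of_subset_left hW,
      hdc Y (W ∩ Y) Set.inter_subset_right hS, fun s hs => hT s hs.2⟩
  · intro h
    refine ⟨{s ∈ X | ¬ T s}, {s ∈ X | T s}, ?_, ?_, fun s hs => hs.2⟩
    · ext s; by_cases hts : T s <;> simp [hts]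
    · rw [hcoh _ (hX.subset (Set.sep_subset _ _))]
      intro W hW hWk
      obtain ⟨Y, Z, hYZ, hS, hT⟩ := h W (hW.trans (Set.sep_subset _ _)) hWk
      have : Z = ∅ := by
        ext s
        simp only [Set.mem_empty_iff_false, iff_false]
        intro hs
        exact (hW (hYZ ▸ Set.mem_union_right _ hs)).2 (hT s hs)
      rw [this, Set.union_empty] at hYZ
      exact hYZ ▸ hS
end
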